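/- For V′ ∈ C^{q−1}, define the contractible (blue) magnetic operator M^b_{V′} on V by (M^b_{V′} ψ)(a,b,c) := (−1)^{∫ a ∪ V′ ∪ c} ψ(a, b + dV′, c). Then M^b_{V′} is an involution, and: (i) for every σ ∈ Σ_{p−1} the group commutator M^b_{V′} ∘ Ã^r_σ ∘ M^b_{V′} ∘ Ã^r_σ is the diagonal operator multiplying ψ(a,b,c) by (−1)^{∫ (σ̃ ∪ V′) ∪ dc}; (ii) M^b_{V′} commutes with every dressed Gauss operator and every flux operator when restricted to the zero-flux subspace; in particular, the magnetic operators commute with all the stabilizers on the code space (Lemma 4, stated for the blue colour; the red and green cases are analogous). -/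

import Mathlib

noncomputable section

open scoped BigOperators

/-- Transport a cochain along an equality of degrees. -/
def cellCast {cells : ℕ → Type} {i j : ℕ} (h : i = j) (x : cells i → ZMod 2) :
    cells j → ZMod 2 :=
  fun σ => x (cast (congrArg cells h.symm) σ)

/-- A *cochain system* of dimension `N` over `𝔽₂ = ZMod 2`: finite sets of cells in
each degree, `𝔽₂`-linear coboundary maps `d` with `d ∘ d = 0`, `𝔽₂`-bilinear associative
cup products satisfying the Leibniz rule, and an `𝔽₂`-linear integral on top-degree
cochains satisfying the Stokes identity.  (These are the structures carried by the `𝔽₂`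
cellular cochains of a closed Poincaré CW complex.) -/
structure CochainSystem (N : ℕ) where
  cells : ℕ → Type
  fintypeCells : ∀ i, Fintype (cells i)
  decEqCells : ∀ i, DecidableEq (cells i)
  d : ∀ i, (cells i → ZMod 2) →ₗ[ZMod 2] (cells (i + 1) → ZMod 2)
  cup : ∀ i j, (cells i → ZMod 2) →ₗ[ZMod 2]
    ((cells j → ZMod 2) →ₗ[ZMod 2] (cells (i + j) → ZMod 2))
  integ : (cells N → ZMod 2) →ₗ[ZMod 2] ZMod 2
  d_comp_d : ∀ (i : ℕ) (x : cells i → ZMod 2), d (i + 1) (d i x) = 0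
  cup_assoc : ∀ {i j k : ℕ} (u : cells i → ZMod 2) (v : cells j → ZMod 2)
    (w : cells k → ZMod 2),
    cup (i + j) k (cup i j u v) w
      = cellCast (Nat.add_assoc i j k).symm (cup i (j + k) u (cup j k v w))
  leibniz : ∀ {i j : ℕ} (u : cells i → ZMod 2) (v : cells j → ZMod 2),
    d (i + j) (cup i j u v)
      = cellCast (by omega : i + 1 + j = i + j + 1) (cup (i + 1) j (d i u) v)
        + cellCast (by omega : i + (j + 1) = i + j + 1) (cup i (j + 1) u (d j v))
  stokes : ∀ (k : ℕ) (hk : k + 1 = N) (w : cells k → ZMod 2),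
    integ (cellCast hk (d k w)) = 0

attribute [instance] CochainSystem.fintypeCells CochainSystem.decEqCells

namespace CochainSystem

variable {N : ℕ}

/-- The degree-`i` cochain space `Cⁱ`. -/
abbrev C (S : CochainSystem N) (i : ℕ) : Type := S.cells i → ZMod 2

/-- The indicator cochain `σ̃` of a cell `σ`. -/
def indicator (S : CochainSystem N) {i : ℕ} (σ : S.cells i) : S.C i :=
  fun τ => if τ = σ then 1 else 0

/-- `∫ (u ∪ v) ∪ w` when the degrees add up to `N`. -/
def integ3 (S : CochainSystem N) {i j k : ℕ} (h : i + j + k = N)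
    (u : S.C i) (v : S.C j) (w : S.C k) : ZMod 2 :=
  S.integ (cellCast h (S.cup (i + j) k (S.cup i j u v) w))

end CochainSystem

/-- The sign `(-1)ᵗ ∈ ℂ` of `t ∈ 𝔽₂`. -/
def sgn (t : ZMod 2) : ℂ := (-1 : ℂ) ^ t.val

open CochainSystem

section Twisted

variable {N p q s : ℕ}

/-- A configuration of `ℤ₂`-gauge fields for the three colours `r`, `b`, `g`. -/
abbrev Config (S : CochainSystem N) (p q s : ℕ) : Type :=
  S.C (p + 1) × S.C (q + 1) × S.C (s + 1)

/-- The three-colour qubit space `V = ((Cᵖ × C^q × C^s) → ℂ)` of the twisted code. -/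
abbrev QSpace (S : CochainSystem N) (p q s : ℕ) : Type := Config S p q s → ℂ

/-- The dressed Gauss operator `Ã^r_σ` of the twisted code:
`(Ã^r_σ ψ)(a,b,c) = (−1)^{∫ σ̃ ∪ b ∪ c} ψ(a + dσ̃, b, c)`. -/
def gaussR (S : CochainSystem N) (h : p + 1 + (q + 1) + (s + 1) = N + 1)
    (σ : S.cells p) : QSpace S p q s → QSpace S p q s :=
  fun ψ x =>
    sgn (S.integ3 (show p + (q + 1) + (s + 1) = N by omega) (S.indicator σ) x.2.1 x.2.2)
      * ψ (x.1 + S.d p (S.indicator σ), x.2.1, x.2.2)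

/-- The dressed Gauss operator `Ã^b_ξ`:
`(Ã^b_ξ ψ)(a,b,c) = (−1)^{∫ a ∪ ξ̃ ∪ c} ψ(a, b + dξ̃, c)`. -/
def gaussB (S : CochainSystem N) (h : p + 1 + (q + 1) + (s + 1) = N + 1)
    (ξ : S.cells q) : QSpace S p q s → QSpace S p q s :=
  fun ψ x =>
    sgn (S.integ3 (show p + 1 + q + (s + 1) = N by omega) x.1 (S.indicator ξ) x.2.2)
      * ψ (x.1, x.2.1 + S.d q (S.indicator ξ), x.2.2)

/-- The dressed Gauss operator `Ã^g_ζ`: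
`(Ã^g_ζ ψ)(a,b,c) = (−1)^{∫ a ∪ b ∪ ζ̃} ψ(a, b, c + dζ̃)`. -/
def gaussG (S : CochainSystem N) (h : p + 1 + (q + 1) + (s + 1) = N + 1)
    (ζ : S.cells s) : QSpace S p q s → QSpace S p q s :=
  fun ψ x =>
    sgn (S.integ3 (show p + 1 + (q + 1) + s = N by omega) x.1 x.2.1 (S.indicator ζ))
      * ψ (x.1, x.2.1, x.2.2 + S.d s (S.indicator ζ))

/-- The diagonal flux operator `B^r_τ`, multiplying `ψ(a,b,c)` by `(−1)^{(da)(τ)}`. -/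
def fluxR (S : CochainSystem N) (p q s : ℕ) (τ : S.cells (p + 2)) :
    QSpace S p q s → QSpace S p q s :=
  fun ψ x => sgn (S.d (p + 1) x.1 τ) * ψ x

/-- The diagonal flux operator `B^b_τ′`, multiplying `ψ(a,b,c)` by `(−1)^{(db)(τ′)}`. -/
def fluxB (S : CochainSystem N) (p q s : ℕ) (τ' : S.cells (q + 2)) :
    QSpace S p q s → QSpace S p q s :=
  fun ψ x => sgn (S.d (q + 1) x.2.1 τ') * ψ x

/-- The diagonal flux operator `B^g_τ″`, multiplying `ψ(a,b,c)` by `(−1)^{(dc)(τ″)}`. -/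
def fluxG (S : CochainSystem N) (p q s : ℕ) (τ'' : S.cells (s + 2)) :
    QSpace S p q s → QSpace S p q s :=
  fun ψ x => sgn (S.d (s + 1) x.2.2 τ'') * ψ x

/-- The zero-flux subspace: vectors supported on flat (cocycle) configurations. -/
def ZeroFlux (S : CochainSystem N) (p q s : ℕ) : Set (QSpace S p q s) :=
  {ψ | ∀ x : Config S p q s, ψ x ≠ 0 →
    S.d (p + 1) x.1 = 0 ∧ S.d (q + 1) x.2.1 = 0 ∧ S.d (s + 1) x.2.2 = 0}

/-- The code space of the twisted code: vectors fixed by every dressed Gauss operator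
and every flux operator. -/
def CodeSpace (S : CochainSystem N) (h : p + 1 + (q + 1) + (s + 1) = N + 1) :
    Set (QSpace S p q s) :=
  {ψ | (∀ σ : S.cells p, gaussR S h σ ψ = ψ)
    ∧ (∀ ξ : S.cells q, gaussB S h ξ ψ = ψ)
    ∧ (∀ ζ : S.cells s, gaussG S h ζ ψ = ψ)
    ∧ (∀ τ : S.cells (p + 2), fluxR S p q s τ ψ = ψ)
    ∧ (∀ τ' : S.cells (q + 2), fluxB S p q s τ' ψ = ψ)
    ∧ (∀ τ'' : S.cells (s + 2), fluxG S p q s τ'' ψ = ψ)}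

/-- The set of stabilizer generators of the twisted code. -/
def Stabilizer (S : CochainSystem N) (h : p + 1 + (q + 1) + (s + 1) = N + 1) :
    Set (QSpace S p q s → QSpace S p q s) :=
  {O | (∃ σ, O = gaussR S h σ) ∨ (∃ ξ, O = gaussB S h ξ) ∨ (∃ ζ, O = gaussG S h ζ)
    ∨ (∃ τ, O = fluxR S p q s τ) ∨ (∃ τ', O = fluxB S p q s τ')
    ∨ (∃ τ'', O = fluxG S p q s τ'')}

end Twisted

/-- The contractible (blue) magnetic operator `M^b_{V′}`:
`(M^b_{V′} ψ)(a,b,c) = (−1)^{∫ a ∪ V′ ∪ c} ψ(a, b + dV′, c)`. -/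
def magB {N p q s : ℕ} (S : CochainSystem N) (h : p + 1 + (q + 1) + (s + 1) = N + 1)
    (v : S.C q) : QSpace S p q s → QSpace S p q s :=
  fun ψ x =>
    sgn (S.integ3 (show p + 1 + q + (s + 1) = N by omega) x.1 v x.2.2)
      * ψ (x.1, x.2.1 + S.d q v, x.2.2)

/-! Every operator here is a phase shift `ψ ↦ (x ↦ (−1)^{f x} ψ (x + t))` on configurations
`x = (a, b, c)`. Two phase shifts commute on every vector supported where
`D x = f x + g (x + t) + g x + f (x + u)` vanishes; when each phase is invariant under its own
translation, of order two, their group commutator is multiplication by `(−1)^D`.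
Expanding the integrals trilinearly, `D` for `M^b_{V′}` against `Ã^r_σ` is
`∫ dσ̃ ∪ V′ ∪ c + ∫ σ̃ ∪ dV′ ∪ c`, which Stokes turns into `∫ σ̃ ∪ V′ ∪ dc`; against `Ã^g_ζ` it is
likewise `∫ da ∪ V′ ∪ ζ̃`; against the other generators it vanishes identically (for `B^b`
because `d dV′ = 0`). Both survivors vanish on flat configurations, and vectors fixed by the
flux operators are supported on those. -/

lemma sgn_add (t u : ZMod 2) : sgn (t + u) = sgn t * sgn u := by
  simp only [sgn, ZMod.val_add, ← pow_add, ← neg_one_pow_eq_pow_mod_two]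

@[simp]
lemma sgn_zero : sgn 0 = 1 := by
  simp [sgn]

lemma sgn_eq_one_iff (t : ZMod 2) : sgn t = 1 ↔ t = 0 := by
  rw [sgn, neg_one_pow_eq_one_iff_even (by norm_num), ← ZMod.natCast_eq_zero_iff_even,
    ZMod.natCast_zmod_val]

lemma eq_zero_of_sgn_mul_eq_self {t : ZMod 2} {z : ℂ} (hz : z ≠ 0) (h : sgn t * z = z) :
    t = 0 :=
  (sgn_eq_one_iff t).mp (mul_eq_right₀ hz |>.mp h)

section PhaseShift

variable {G : Type*} [AddCommMonoid G]

def phaseShift (f : G → ZMod 2) (t : G) (ψ : G → ℂ) : G → ℂ :=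
  fun x => sgn (f x) * ψ (x + t)

def phaseShiftDefect (f : G → ZMod 2) (t : G) (g : G → ZMod 2) (u : G) (x : G) : ZMod 2 :=
  f x + g (x + t) + g x + f (x + u)

lemma phaseShift_phaseShift (f g : G → ZMod 2) (t u : G) (ψ : G → ℂ) :
    phaseShift f t (phaseShift g u ψ) = phaseShift (fun x => f x + g (x + t)) (t + u) ψ := by
  funext x
  simp only [phaseShift, sgn_add, add_assoc, mul_assoc]

lemma phaseShift_involutive {f : G → ZMod 2} {t : G} (hf : ∀ x, f (x + t) = f x)
    (ht : t + t = 0) (ψ : G → ℂ) : phaseShift f t (phaseShift f t ψ) = ψ := by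
  rw [phaseShift_phaseShift]
  funext x
  simp [phaseShift, hf, ht, CharTwo.add_self_eq_zero]

lemma phaseShift_commutator_apply {f g : G → ZMod 2} {t u : G}
    (hf : ∀ x, f (x + t) = f x) (hg : ∀ x, g (x + u) = g x) (ht : t + t = 0) (hu : u + u = 0)
    (ψ : G → ℂ) (x : G) :
    phaseShift f t (phaseShift g u (phaseShift f t (phaseShift g u ψ))) x
      = sgn (phaseShiftDefect f t g u x) * ψ x := by
  have hxu : x + t + u + t = x + u := by
    rw [add_right_comm x t u, add_assoc (x + u), ht, add_zero]
  have hx : x + u + u = x := by rw [add_assoc, hu, add_zero]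
  simp only [phaseShift, phaseShiftDefect, sgn_add, hxu, hx]
  rw [add_right_comm x t u, hf, hg]
  ring

lemma phaseShift_comm_of_defect_eq_zero {f g : G → ZMod 2} {t u : G} {ψ : G → ℂ}
    (hdef : ∀ x, ψ (x + t + u) ≠ 0 → phaseShiftDefect f t g u x = 0) :
    phaseShift f t (phaseShift g u ψ) = phaseShift g u (phaseShift f t ψ) := by
  funext x
  simp only [phaseShift, ← mul_assoc, ← sgn_add, add_right_comm x u t]
  by_cases hψ : ψ (x + t + u) = 0
  · simp [hψ]
  · congr 2
    rw [← CharTwo.add_eq_zero, ← add_assoc]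
    exact hdef x hψ

lemma phaseShift_comm_of_invariant {f g : G → ZMod 2} {t u : G} (hf : ∀ x, f (x + u) = f x)
    (hg : ∀ x, g (x + t) = g x) (ψ : G → ℂ) :
    phaseShift f t (phaseShift g u ψ) = phaseShift g u (phaseShift f t ψ) :=
  phaseShift_comm_of_defect_eq_zero fun x _ => by
    simp only [phaseShiftDefect, hf, hg]
    grind

end PhaseShift

lemma cellCast_add {cells : ℕ → Type} {i j : ℕ} (h : i = j) (x y : cells i → ZMod 2) :
    cellCast h (x + y) = cellCast h x + cellCast h y := by
  subst h; rfl

lemma cellCast_zero {cells : ℕ → Type} {i j : ℕ} (h : i = j) :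
    cellCast h (0 : cells i → ZMod 2) = 0 := by
  subst h; rfl

lemma cellCast_cellCast {cells : ℕ → Type} {i j k : ℕ} (h : i = j) (h' : j = k)
    (x : cells i → ZMod 2) : cellCast h' (cellCast h x) = cellCast (h.trans h') x := by
  subst h h'; rfl

namespace CochainSystem

variable {N : ℕ} (S : CochainSystem N) {i j k : ℕ}

lemma cup_cellCast_left {i' : ℕ} (h : i = i') (x : S.C i) (y : S.C j) :
    S.cup i' j (cellCast h x) y = cellCast (by rw [h]) (S.cup i j x y) := by
  subst h; rfl

lemma integ3_add_left (hd : i + j + k = N) (u u' : S.C i) (v : S.C j) (w : S.C k) :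
    S.integ3 hd (u + u') v w = S.integ3 hd u v w + S.integ3 hd u' v w := by
  simp [integ3, cellCast_add]

lemma integ3_add_mid (hd : i + j + k = N) (u : S.C i) (v v' : S.C j) (w : S.C k) :
    S.integ3 hd u (v + v') w = S.integ3 hd u v w + S.integ3 hd u v' w := by
  simp [integ3, cellCast_add]

lemma integ3_add_right (hd : i + j + k = N) (u : S.C i) (v : S.C j) (w w' : S.C k) :
    S.integ3 hd u v (w + w') = S.integ3 hd u v w + S.integ3 hd u v w' := by
  simp [integ3, cellCast_add]

lemma integ3_zero_left (hd : i + j + k = N) (v : S.C j) (w : S.C k) :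
    S.integ3 hd 0 v w = 0 := by
  simp [integ3, cellCast_zero]

lemma integ3_zero_right (hd : i + j + k = N) (u : S.C i) (v : S.C j) :
    S.integ3 hd u v 0 = 0 := by
  simp [integ3, cellCast_zero]

lemma integ3_stokes (h₁ : i + 1 + j + k = N) (h₂ : i + (j + 1) + k = N)
    (h₃ : i + j + (k + 1) = N) (u : S.C i) (v : S.C j) (w : S.C k) :
    S.integ3 h₁ (S.d i u) v w + S.integ3 h₂ u (S.d j v) w + S.integ3 h₃ u v (S.d k w) = 0 := by
  have hst := S.stokes (i + j + k) (by omega) (S.cup (i + j) k (S.cup i j u v) w)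
  rw [S.leibniz (S.cup i j u v) w, S.leibniz u v] at hst
  simp only [map_add, LinearMap.add_apply, S.cup_cellCast_left, cellCast_add,
    cellCast_cellCast] at hst
  exact hst

end CochainSystem

section Operators

variable {N p q s : ℕ} (S : CochainSystem N) (h : p + 1 + (q + 1) + (s + 1) = N + 1)

lemma magB_eq_phaseShift (v : S.C q) :
    magB (p := p) (s := s) S h v
      = phaseShift (fun x => S.integ3 (by omega) x.1 v x.2.2) (0, S.d q v, 0) := by
  funext ψ ⟨a, b, c⟩
  simp [magB, phaseShift]

lemma gaussR_eq_phaseShift (σ : S.cells p) :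
    gaussR (q := q) (s := s) S h σ
      = phaseShift (fun x => S.integ3 (by omega) (S.indicator σ) x.2.1 x.2.2)
          (S.d p (S.indicator σ), 0, 0) := by
  funext ψ ⟨a, b, c⟩
  simp [gaussR, phaseShift]

lemma gaussB_eq_phaseShift (ξ : S.cells q) :
    gaussB (p := p) (s := s) S h ξ
      = phaseShift (fun x => S.integ3 (by omega) x.1 (S.indicator ξ) x.2.2)
          (0, S.d q (S.indicator ξ), 0) := by
  funext ψ ⟨a, b, c⟩
  simp [gaussB, phaseShift]

lemma gaussG_eq_phaseShift (ζ : S.cells s) :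
    gaussG (p := p) (q := q) S h ζ
      = phaseShift (fun x => S.integ3 (by omega) x.1 x.2.1 (S.indicator ζ))
          (0, 0, S.d s (S.indicator ζ)) := by
  funext ψ ⟨a, b, c⟩
  simp [gaussG, phaseShift]

lemma fluxR_eq_phaseShift (τ : S.cells (p + 2)) :
    fluxR S p q s τ = phaseShift (fun x => S.d (p + 1) x.1 τ) 0 := by
  funext ψ ⟨a, b, c⟩
  simp [fluxR, phaseShift]

lemma fluxB_eq_phaseShift (τ' : S.cells (q + 2)) :
    fluxB S p q s τ' = phaseShift (fun x => S.d (q + 1) x.2.1 τ') 0 := by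
  funext ψ ⟨a, b, c⟩
  simp [fluxB, phaseShift]

lemma fluxG_eq_phaseShift (τ'' : S.cells (s + 2)) :
    fluxG S p q s τ'' = phaseShift (fun x => S.d (s + 1) x.2.2 τ'') 0 := by
  funext ψ ⟨a, b, c⟩
  simp [fluxG, phaseShift]

lemma config_add_self (x : Config S p q s) : x + x = 0 := by
  ext <;> simp [CharTwo.add_self_eq_zero]

lemma codeSpace_subset_zeroFlux : CodeSpace S h ⊆ ZeroFlux S p q s := by
  rintro ψ ⟨-, -, -, hR, hB, hG⟩ x hx
  exact ⟨funext fun τ => eq_zero_of_sgn_mul_eq_self hx (congrFun (hR τ) x),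
    funext fun τ' => eq_zero_of_sgn_mul_eq_self hx (congrFun (hB τ') x),
    funext fun τ'' => eq_zero_of_sgn_mul_eq_self hx (congrFun (hG τ'') x)⟩

variable (v : S.C q)

lemma magB_magB (ψ : QSpace S p q s) : magB S h v (magB S h v ψ) = ψ := by
  rw [magB_eq_phaseShift]
  exact phaseShift_involutive (fun x => by simp) (config_add_self S _) ψ

lemma magB_gaussR_defect (hd : p + q + (s + 1 + 1) = N) (σ : S.cells p) (x : Config S p q s) :
    phaseShiftDefect (fun x : Config S p q s => S.integ3 (by omega) x.1 v x.2.2) (0, S.d q v, 0)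
        (fun x => S.integ3 (by omega) (S.indicator σ) x.2.1 x.2.2) (S.d p (S.indicator σ), 0, 0) x
      = S.integ3 hd (S.indicator σ) v (S.d (s + 1) x.2.2) := by
  obtain ⟨a, b, c⟩ := x
  have hstokes := S.integ3_stokes (by omega) (by omega) (by omega) (S.indicator σ) v c
  simp only [phaseShiftDefect, Prod.mk_add_mk, add_zero, S.integ3_add_left, S.integ3_add_mid]
  grind

lemma magB_gaussG_defect (hd : p + 1 + 1 + q + s = N) (ζ : S.cells s) (x : Config S p q s) :
    phaseShiftDefect (fun x : Config S p q s => S.integ3 (by omega) x.1 v x.2.2) (0, S.d q v, 0)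
        (fun x => S.integ3 (by omega) x.1 x.2.1 (S.indicator ζ)) (0, 0, S.d s (S.indicator ζ)) x
      = S.integ3 hd (S.d (p + 1) x.1) v (S.indicator ζ) := by
  obtain ⟨a, b, c⟩ := x
  have hstokes := S.integ3_stokes (by omega) (by omega) (by omega) a v (S.indicator ζ)
  simp only [phaseShiftDefect, Prod.mk_add_mk, add_zero, S.integ3_add_mid, S.integ3_add_right]
  grind

lemma magB_gaussR_commutator (hd : p + q + (s + 1 + 1) = N) (σ : S.cells p)
    (ψ : QSpace S p q s) (x : Config S p q s) :
    (magB S h v ∘ gaussR S h σ ∘ magB S h v ∘ gaussR S h σ) ψ x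
      = sgn (S.integ3 hd (S.indicator σ) v (S.d (s + 1) x.2.2)) * ψ x := by
  rw [Function.comp_apply, Function.comp_apply, Function.comp_apply, magB_eq_phaseShift,
    gaussR_eq_phaseShift, phaseShift_commutator_apply (fun x => by simp) (fun x => by simp)
      (config_add_self S _) (config_add_self S _),
    magB_gaussR_defect S h v hd]

lemma magB_comm_of_mem_zeroFlux {O : QSpace S p q s → QSpace S p q s} (hO : O ∈ Stabilizer S h)
    {ψ : QSpace S p q s} (hψ : ψ ∈ ZeroFlux S p q s) : magB S h v (O ψ) = O (magB S h v ψ) := by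
  rw [magB_eq_phaseShift S h]
  rcases hO with ⟨σ, rfl⟩ | ⟨ξ, rfl⟩ | ⟨ζ, rfl⟩ | ⟨τ, rfl⟩ | ⟨τ', rfl⟩ | ⟨τ'', rfl⟩
  · rw [gaussR_eq_phaseShift]
    refine phaseShift_comm_of_defect_eq_zero fun x hx => ?_
    have hc : S.d (s + 1) x.2.2 = 0 := by simpa using (hψ _ hx).2.2
    rw [magB_gaussR_defect S h v (by omega), hc, S.integ3_zero_right]
  · rw [gaussB_eq_phaseShift]
    exact phaseShift_comm_of_invariant (fun x => by simp) (fun x => by simp) ψ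
  · rw [gaussG_eq_phaseShift]
    refine phaseShift_comm_of_defect_eq_zero fun x hx => ?_
    have ha : S.d (p + 1) x.1 = 0 := by simpa using (hψ _ hx).1
    rw [magB_gaussG_defect S h v (by omega), ha, S.integ3_zero_left]
  · rw [fluxR_eq_phaseShift]
    exact phaseShift_comm_of_invariant (fun x => by simp) (fun x => by simp) ψ
  · rw [fluxB_eq_phaseShift]
    exact phaseShift_comm_of_invariant (fun x => by simp) (fun x => by simp [S.d_comp_d]) ψ
  · rw [fluxG_eq_phaseShift]
    exact phaseShift_comm_of_invariant (fun x => by simp) (fun x => by simp) ψ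

end Operators

/-- **Lemma 4 (blue colour).** The magnetic operator `M^b_{V′}` is an involution;
its group commutator with a red dressed Gauss operator `Ã^r_σ` is the diagonal operator
multiplying `ψ(a,b,c)` by `(−1)^{∫ (σ̃ ∪ V′) ∪ dc}`; and `M^b_{V′}` commutes with every
dressed Gauss operator and every flux operator on the zero-flux subspace — in particular
the magnetic operators commute with all the stabilizers on the code space. -/
theorem magnetic_operator_commutes_with_stabilizers
    {N p q s : ℕ} (S : CochainSystem N) (h : p + 1 + (q + 1) + (s + 1) = N + 1)
    (v : S.C q) :
    (magB S h v ∘ magB S h v = id) ∧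
    (∀ (σ : S.cells p) (ψ : QSpace S p q s) (x : Config S p q s),
      (magB S h v ∘ gaussR S h σ ∘ magB S h v ∘ gaussR S h σ) ψ x
        = sgn (S.integ3 (show p + q + (s + 1 + 1) = N by omega)
            (S.indicator σ) v (S.d (s + 1) x.2.2)) * ψ x) ∧
    (∀ O ∈ Stabilizer S h, ∀ ψ ∈ ZeroFlux S p q s,
      magB S h v (O ψ) = O (magB S h v ψ)) ∧
    (∀ O ∈ Stabilizer S h, ∀ ψ ∈ CodeSpace S h,
      magB S h v (O ψ) = O (magB S h v ψ)) := by
  refine ⟨funext (magB_magB S h v), magB_gaussR_commutator S h v _,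
    fun O hO ψ hψ => magB_comm_of_mem_zeroFlux S h v hO hψ,
    fun O hO ψ hψ => magB_comm_of_mem_zeroFlux S h v hO (codeSpace_subset_zeroFlux S h hψ)⟩
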